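/- Let (A₁,≻₁,≺₁) and (A₂,≻₂,≺₂) be anti-dendriform algebras with a matched pair structure (l_{≻₁}, r_{≻₁}, l_{≺₁}, r_{≺₁}, l_{≻₂}, r_{≻₂}, l_{≺₂}, r_{≺₂}). Then the direct sum A₁ ⊕ A₂ with operations (x,a)≻(y,b) = (x≻₁y + l_{≻₂}(a)y + r_{≻₂}(b)x, a≻₂b + l_{≻₁}(x)b + r_{≻₁}(y)a) and (x,a)≺(y,b) = (x≺₁y + l_{≺₂}(a)y + r_{≺₂}(b)x, a≺₂b + l_{≺₁}(x)b + r_{≺₁}(y)a) is an anti-dendriform algebra (the bicrossed product A₁ ⋈ A₂). -/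

import Mathlib

def IsLin (k : Type*) [Field k] {V W : Type*} [AddCommGroup V] [Module k V]
    [AddCommGroup W] [Module k W] (f : V → W) : Prop :=
  ∀ (c : k) (u v : V), f (c • u + v) = c • f u + f v

def IsBilin (k : Type*) [Field k] {U V W : Type*} [AddCommGroup U] [Module k U]
    [AddCommGroup V] [Module k V] [AddCommGroup W] [Module k W]
    (f : U → V → W) : Prop :=
  (∀ x, IsLin k (f x)) ∧ (∀ y, IsLin k (fun x => f x y))

/-- An anti-dendriform algebra structure given by two bilinear operations `s` (≻) and `p` (≺). -/
def IsADAlg (k : Type*) [Field k] {A : Type*} [AddCommGroup A] [Module k A]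
    (s p : A → A → A) : Prop :=
  IsBilin k s ∧ IsBilin k p ∧
  (∀ x y z, s x (s y z) = - s (s x y + p x y) z) ∧
  (∀ x y z, s x (s y z) = - p x (s y z + p y z)) ∧
  (∀ x y z, s x (s y z) = p (p x y) z) ∧
  (∀ x y z, p (s x y) z = s x (p y z))

/-- A representation of an anti-dendriform algebra `(A, s, p)` on `V`. -/
def IsADRep (k : Type*) [Field k] {A V : Type*} [AddCommGroup A] [Module k A]
    [AddCommGroup V] [Module k V]
    (s p : A → A → A) (ls rs lp rp : A → V → V) : Prop :=
  IsBilin k ls ∧ IsBilin k rs ∧ IsBilin k lp ∧ IsBilin k rp ∧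
  (∀ x y v, ls x (ls y v) = - ls (s x y + p x y) v) ∧
  (∀ x y v, ls x (ls y v) = - lp x (ls y v + lp y v)) ∧
  (∀ x y v, ls x (ls y v) = lp (p x y) v) ∧
  (∀ x y v, rs (s x y) v = - rs y (rs x v + rp x v)) ∧
  (∀ x y v, rs (s x y) v = - rp (s x y + p x y) v) ∧
  (∀ x y v, rs (s x y) v = rp y (rp x v)) ∧
  (∀ x y v, ls x (rs y v) = - rs y (ls x v + lp x v)) ∧
  (∀ x y v, ls x (rs y v) = - lp x (rs y v + rp y v)) ∧
  (∀ x y v, ls x (rs y v) = rp y (lp x v)) ∧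
  (∀ x y v, lp (s x y) v = ls x (lp y v)) ∧
  (∀ x y v, rp y (rs x v) = rs (p x y) v) ∧
  (∀ x y v, rp y (ls x v) = ls x (rp y v))

/-- A matched pair of anti-dendriform algebras (conditions (M1)–(M12)). -/
def IsADMatchedPair (k : Type*) [Field k] {A B : Type*} [AddCommGroup A] [Module k A]
    [AddCommGroup B] [Module k B]
    (s1 p1 : A → A → A) (s2 p2 : B → B → B)
    (ls1 rs1 lp1 rp1 : A → B → B) (ls2 rs2 lp2 rp2 : B → A → A) : Prop :=
  IsADRep k s1 p1 ls1 rs1 lp1 rp1 ∧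
  IsADRep k s2 p2 ls2 rs2 lp2 rp2 ∧
  (∀ x y c, s1 x (rs2 c y) + rs2 (ls1 y c) x = - rs2 c (s1 x y + p1 x y)) ∧
  (∀ x y c, s1 x (rs2 c y) + rs2 (ls1 y c) x
      = - p1 x (rs2 c y + rp2 c y) - rp2 (ls1 y c + lp1 y c) x) ∧
  (∀ x y c, s1 x (rs2 c y) + rs2 (ls1 y c) x = rp2 c (p1 x y)) ∧
  (∀ x z b, s1 x (ls2 b z) + rs2 (rs1 z b) x
      = - s1 (rs2 b x + rp2 b x) z - ls2 (ls1 x b + lp1 x b) z) ∧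
  (∀ x z b, s1 x (ls2 b z) + rs2 (rs1 z b) x
      = - p1 x (ls2 b z + lp2 b z) - rp2 (rs1 z b + rp1 z b) x) ∧
  (∀ x z b, s1 x (ls2 b z) + rs2 (rs1 z b) x = p1 (rp2 b x) z + lp2 (lp1 x b) z) ∧
  (∀ y z a, ls2 a (s1 y z) = - s1 (ls2 a y + lp2 a y) z - ls2 (rs1 y a + rp1 y a) z) ∧
  (∀ y z a, ls2 a (s1 y z) = - lp2 a (s1 y z + p1 y z)) ∧
  (∀ y z a, ls2 a (s1 y z) = p1 (lp2 a y) z + lp2 (rp1 y a) z) ∧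
  (∀ x b c, ls1 x (s2 b c) = - s2 (ls1 x b + lp1 x b) c - ls1 (rs2 b x + rp2 b x) c) ∧
  (∀ x b c, ls1 x (s2 b c) = - lp1 x (s2 b c + p2 b c)) ∧
  (∀ x b c, ls1 x (s2 b c) = p2 (lp1 x b) c + lp1 (rp2 b x) c) ∧
  (∀ y a c, s2 a (ls1 y c) + rs1 (rs2 c y) a
      = - s2 (rs1 y a + rp1 y a) c - ls1 (ls2 a y + lp2 a y) c) ∧
  (∀ y a c, s2 a (ls1 y c) + rs1 (rs2 c y) a
      = - p2 a (ls1 y c + lp1 y c) - rp1 (rs2 c y + rp2 c y) a) ∧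
  (∀ y a c, s2 a (ls1 y c) + rs1 (rs2 c y) a = p2 (rp1 y a) c + lp1 (lp2 a y) c) ∧
  (∀ z a b, s2 a (rs1 z b) + rs1 (ls2 b z) a = - rs1 z (s2 a b + p2 a b)) ∧
  (∀ z a b, s2 a (rs1 z b) + rs1 (ls2 b z) a
      = - p2 a (rs1 z b + rp1 z b) - rp1 (ls2 b z + lp2 b z) a) ∧
  (∀ z a b, s2 a (rs1 z b) + rs1 (ls2 b z) a = rp1 z (p2 a b)) ∧
  (∀ x y c, rp2 c (s1 x y) = s1 x (rp2 c y) + rs2 (lp1 y c) x) ∧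
  (∀ x z b, p1 (rs2 b x) z + lp2 (ls1 x b) z = s1 x (lp2 b z) + rs2 (rp1 z b) x) ∧
  (∀ y z a, p1 (ls2 a y) z + lp2 (rs1 y a) z = ls2 a (p1 y z)) ∧
  (∀ x b c, p2 (ls1 x b) c + lp1 (rs2 b x) c = ls1 x (p2 b c)) ∧
  (∀ y a c, p2 (rs1 y a) c + lp1 (ls2 a y) c = s2 a (lp1 y c) + rs1 (rp2 c y) a) ∧
  (∀ z a b, rp1 z (s2 a b) = s2 a (rp1 z b) + rs1 (lp2 b z) a)

/-!
The bilinearity and the four defining identities of `A ⋈ B` are checked componentwise. After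
expanding by bilinearity, the `A`-component of each identity is the sum of one axiom of `A`,
three matched-pair conditions and three axioms of the representation of `B` on `A`. The
`B`-component is the same statement for the matched pair with `A` and `B` exchanged, which is
again a matched pair.
-/

section Bilinear

variable {k U V W : Type*} [Field k] [AddCommGroup U] [Module k U] [AddCommGroup V] [Module k V]
  [AddCommGroup W] [Module k W] {f : U → V → W}

theorem IsLin.map_add {g : V → W} (h : IsLin k g) (u v : V) : g (u + v) = g u + g v := by
  simpa using h 1 u v

theorem IsBilin.smul_add_left (h : IsBilin k f) (c : k) (x x' : U) (y : V) :
    f (c • x + x') y = c • f x y + f x' y :=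
  h.2 y c x x'

theorem IsBilin.smul_add_right (h : IsBilin k f) (x : U) (c : k) (y y' : V) :
    f x (c • y + y') = c • f x y + f x y' :=
  h.1 x c y y'

theorem IsBilin.add_left (h : IsBilin k f) (x x' : U) (y : V) : f (x + x') y = f x y + f x' y :=
  (h.2 y).map_add x x'

theorem IsBilin.add_right (h : IsBilin k f) (x : U) (y y' : V) : f x (y + y') = f x y + f x y' :=
  (h.1 x).map_add y y'

end Bilinear

def bicrossedMul {A B : Type*} [Add A] [Add B] (m1 : A → A → A) (m2 : B → B → B)
    (l1 r1 : A → B → B) (l2 r2 : B → A → A) (u v : A × B) : A × B :=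
  (m1 u.1 v.1 + l2 u.2 v.1 + r2 v.2 u.1, m2 u.2 v.2 + l1 u.1 v.2 + r1 v.1 u.2)

section Bicrossed

variable {k A B : Type*} [Field k] [AddCommGroup A] [Module k A] [AddCommGroup B] [Module k B]
  {s1 p1 : A → A → A} {s2 p2 : B → B → B}
  {ls1 rs1 lp1 rp1 : A → B → B} {ls2 rs2 lp2 rp2 : B → A → A}

theorem IsBilin.bicrossedMul {m1 : A → A → A} {m2 : B → B → B} {l1 r1 : A → B → B}
    {l2 r2 : B → A → A} (hm1 : IsBilin k m1) (hm2 : IsBilin k m2) (hl1 : IsBilin k l1)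
    (hr1 : IsBilin k r1) (hl2 : IsBilin k l2) (hr2 : IsBilin k r2) :
    IsBilin k (bicrossedMul m1 m2 l1 r1 l2 r2) := by
  refine ⟨fun u c v w => ?_, fun w c u v => ?_⟩ <;>
  ext <;>
  simp only [_root_.bicrossedMul, Prod.fst_add, Prod.snd_add, Prod.smul_fst, Prod.smul_snd,
    hm1.smul_add_left, hm1.smul_add_right, hm2.smul_add_left, hm2.smul_add_right,
    hl1.smul_add_left, hl1.smul_add_right, hr1.smul_add_left, hr1.smul_add_right,
    hl2.smul_add_left, hl2.smul_add_right, hr2.smul_add_left, hr2.smul_add_right, smul_add] <;>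
  abel

theorem IsADMatchedPair.swap
    (h : IsADMatchedPair k s1 p1 s2 p2 ls1 rs1 lp1 rp1 ls2 rs2 lp2 rp2) :
    IsADMatchedPair k s2 p2 s1 p1 ls2 rs2 lp2 rp2 ls1 rs1 lp1 rp1 := by
  obtain ⟨h1, h2, M1a, M1b, M1c, M2a, M2b, M2c, M3a, M3b, M3c, M4a, M4b, M4c, M5a, M5b, M5c,
    M6a, M6b, M6c, M7, M8, M9, M10, M11, M12⟩ := h
  exact ⟨h2, h1, fun x y c => M6a c x y, fun x y c => M6b c x y, fun x y c => M6c c x y,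
    fun x z b => M5a b x z, fun x z b => M5b b x z, fun x z b => M5c b x z,
    fun y z a => M4a a y z, fun y z a => M4b a y z, fun y z a => M4c a y z,
    fun x b c => M3a b c x, fun x b c => M3b b c x, fun x b c => M3c b c x,
    fun y a c => M2a a c y, fun y a c => M2b a c y, fun y a c => M2c a c y,
    fun z a b => M1a a b z, fun z a b => M1b a b z, fun z a b => M1c a b z,
    fun x y c => M12 c x y, fun x z b => M11 b x z, fun y z a => M10 a y z,
    fun x b c => M9 b c x, fun y a c => M8 a c y, fun z a b => M7 a b z⟩

local infixl:70 " ≻ " => bicrossedMul s1 s2 ls1 rs1 ls2 rs2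
local infixl:70 " ≺ " => bicrossedMul p1 p2 lp1 rp1 lp2 rp2

theorem bicrossed_fst_succ_succ_eq_neg_mul_succ (h1 : IsADAlg k s1 p1)
    (hmp : IsADMatchedPair k s1 p1 s2 p2 ls1 rs1 lp1 rp1 ls2 rs2 lp2 rp2) (u v w : A × B) :
    (u ≻ (v ≻ w)).1 = (-((u ≻ v + u ≺ v) ≻ w)).1 := by
  obtain ⟨hs, -, hA, -⟩ := h1
  obtain ⟨-, ⟨hls, hrs, -, -, hR1, -, -, hR4, -, -, hR7, -⟩,
    hM1, -, -, hM2, -, -, hM3, -⟩ := hmp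
  obtain ⟨x, a⟩ := u; obtain ⟨y, b⟩ := v; obtain ⟨z, c⟩ := w
  simp only [bicrossedMul, Prod.fst_add, Prod.snd_add, Prod.fst_neg,
    hs.add_left, hs.add_right, hls.add_left, hls.add_right, hrs.add_left, hrs.add_right] at *
  linear_combination (norm := abel)
    hA x y z + hM1 x y c + hM2 x z b + hM3 y z a + hR1 a b z + hR4 b c x + hR7 a c y

theorem bicrossed_fst_succ_succ_eq_neg_prec_mul (h1 : IsADAlg k s1 p1)
    (hmp : IsADMatchedPair k s1 p1 s2 p2 ls1 rs1 lp1 rp1 ls2 rs2 lp2 rp2) (u v w : A × B) :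
    (u ≻ (v ≻ w)).1 = (-(u ≺ (v ≻ w + v ≺ w))).1 := by
  obtain ⟨hs, hp, -, hA, -⟩ := h1
  obtain ⟨-, ⟨hls, hrs, hlp, hrp, -, hR2, -, -, hR5, -, -, hR8, -⟩,
    -, hM1, -, -, hM2, -, -, hM3, -⟩ := hmp
  obtain ⟨x, a⟩ := u; obtain ⟨y, b⟩ := v; obtain ⟨z, c⟩ := w
  simp only [bicrossedMul, Prod.fst_add, Prod.snd_add, Prod.fst_neg,
    hs.add_right, hp.add_right, hls.add_right, hrs.add_left, hlp.add_right, hrp.add_left] at *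
  linear_combination (norm := abel)
    hA x y z + hM1 x y c + hM2 x z b + hM3 y z a + hR2 a b z + hR5 b c x + hR8 a c y

theorem bicrossed_fst_succ_succ_eq_prec_prec (h1 : IsADAlg k s1 p1)
    (hmp : IsADMatchedPair k s1 p1 s2 p2 ls1 rs1 lp1 rp1 ls2 rs2 lp2 rp2) (u v w : A × B) :
    (u ≻ (v ≻ w)).1 = ((u ≺ v) ≺ w).1 := by
  obtain ⟨hs, hp, -, -, hA, -⟩ := h1
  obtain ⟨-, ⟨hls, hrs, hlp, hrp, -, -, hR3, -, -, hR6, -, -, hR9, -⟩,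
    -, -, hM1, -, -, hM2, -, -, hM3, -⟩ := hmp
  obtain ⟨x, a⟩ := u; obtain ⟨y, b⟩ := v; obtain ⟨z, c⟩ := w
  simp only [bicrossedMul,
    hs.add_right, hp.add_left, hls.add_right, hrs.add_left, hlp.add_left, hrp.add_right] at *
  linear_combination (norm := abel)
    hA x y z + hM1 x y c + hM2 x z b + hM3 y z a + hR3 a b z + hR6 b c x + hR9 a c y

theorem bicrossed_fst_prec_succ_eq_succ_prec (h1 : IsADAlg k s1 p1)
    (hmp : IsADMatchedPair k s1 p1 s2 p2 ls1 rs1 lp1 rp1 ls2 rs2 lp2 rp2) (u v w : A × B) :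
    ((u ≻ v) ≺ w).1 = (u ≻ (v ≺ w)).1 := by
  obtain ⟨hs, hp, -, -, -, hA⟩ := h1
  obtain ⟨-, ⟨hls, hrs, hlp, hrp, -, -, -, -, -, -, -, -, -, hR10, hR11, hR12⟩,
    -, -, -, -, -, -, -, -, -, -, -, -, -, -, -, -, -, -, hM7, hM8, hM9, -⟩ := hmp
  obtain ⟨x, a⟩ := u; obtain ⟨y, b⟩ := v; obtain ⟨z, c⟩ := w
  simp only [bicrossedMul,
    hs.add_right, hp.add_left, hls.add_right, hrs.add_left, hlp.add_left, hrp.add_right] at *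
  linear_combination (norm := abel)
    hA x y z + hM7 x y c + hM8 x z b + hM9 y z a + hR10 a b z + hR11 b c x + hR12 a c y

end Bicrossed

theorem stmt8 {k A B : Type*} [Field k] [AddCommGroup A] [Module k A]
    [AddCommGroup B] [Module k B]
    (s1 p1 : A → A → A) (s2 p2 : B → B → B)
    (ls1 rs1 lp1 rp1 : A → B → B) (ls2 rs2 lp2 rp2 : B → A → A)
    (h1 : IsADAlg k s1 p1) (h2 : IsADAlg k s2 p2)
    (hmp : IsADMatchedPair k s1 p1 s2 p2 ls1 rs1 lp1 rp1 ls2 rs2 lp2 rp2) :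
    IsADAlg k
      (fun u v : A × B =>
        ((s1 u.1 v.1 + ls2 u.2 v.1 + rs2 v.2 u.1,
          s2 u.2 v.2 + ls1 u.1 v.2 + rs1 v.1 u.2) : A × B))
      (fun u v : A × B =>
        ((p1 u.1 v.1 + lp2 u.2 v.1 + rp2 v.2 u.1,
          p2 u.2 v.2 + lp1 u.1 v.2 + rp1 v.1 u.2) : A × B)) := by
  obtain ⟨hls1, hrs1, hlp1, hrp1, -⟩ := hmp.1
  obtain ⟨hls2, hrs2, hlp2, hrp2, -⟩ := hmp.2.1
  -- The `B`-components are, definitionally, the `A`-components for the swapped matched pair.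
  refine ⟨h1.1.bicrossedMul h2.1 hls1 hrs1 hls2 hrs2,
    h1.2.1.bicrossedMul h2.2.1 hlp1 hrp1 hlp2 hrp2,
    fun u v w => Prod.ext ?_ ?_, fun u v w => Prod.ext ?_ ?_, fun u v w => Prod.ext ?_ ?_,
    fun u v w => Prod.ext ?_ ?_⟩
  · exact bicrossed_fst_succ_succ_eq_neg_mul_succ h1 hmp u v w
  · exact bicrossed_fst_succ_succ_eq_neg_mul_succ h2 hmp.swap u.swap v.swap w.swap
  · exact bicrossed_fst_succ_succ_eq_neg_prec_mul h1 hmp u v w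
  · exact bicrossed_fst_succ_succ_eq_neg_prec_mul h2 hmp.swap u.swap v.swap w.swap
  · exact bicrossed_fst_succ_succ_eq_prec_prec h1 hmp u v w
  · exact bicrossed_fst_succ_succ_eq_prec_prec h2 hmp.swap u.swap v.swap w.swap
  · exact bicrossed_fst_prec_succ_eq_succ_prec h1 hmp u v w
  · exact bicrossed_fst_prec_succ_eq_succ_prec h2 hmp.swap u.swap v.swap w.swap
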